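/- Single-slot one-directional energy transfer for the two-way channel: fix k ∈ {1,2}, let j ≠ k, and suppose h_1, h_2 > 0, σ_1², σ_2² > 0, α_k ∈ (0,1], and π_k, π_j ≥ 0. Then the function f(δ) = (1/2)·log(1 + h_k(π_k − δ)/σ_j²) + (1/2)·log(1 + h_j(π_j + α_k δ)/σ_k²) attains its maximum over δ ∈ [0, π_k] at δ* = min{ π_k, (1/2)·max{ 0, (σ_j²/h_k + π_k) − (1/α_k)(σ_k²/h_j + π_j) } }. -/
import Mathlib


/-- Optimal single-slot one-directional energy transfer for the
two-way channel.  Here node `k` (channel gain `hk`, transfer efficiency `ak`,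
consumed power `pk`) transfers `d` units, received as `ak * d` by node `j`
(channel gain `hj`, consumed power `pj`); `sk`, `sj` are the noise powers at
nodes `k` and `j`, respectively. -/
theorem stmt_4
    (hk hj sk sj ak pk pj : ℝ)
    (hhk : 0 < hk) (hhj : 0 < hj) (hsk : 0 < sk) (hsj : 0 < sj)
    (hak : ak ∈ Set.Ioc (0:ℝ) 1) (hpk : 0 ≤ pk) (hpj : 0 ≤ pj) :
    let dstar := min pk (1/2 * max 0 ((sj/hk + pk) - (1/ak) * (sk/hj + pj)))
    dstar ∈ Set.Icc 0 pk ∧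
    ∀ d ∈ Set.Icc 0 pk,
      1/2 * Real.log (1 + hk * (pk - d) / sj)
        + 1/2 * Real.log (1 + hj * (pj + ak * d) / sk)
      ≤ 1/2 * Real.log (1 + hk * (pk - dstar) / sj)
        + 1/2 * Real.log (1 + hj * (pj + ak * dstar) / sk) := by
  obtain ⟨hak0, hak1⟩ := hak
  intro dstar
  set A : ℝ := sj/hk + pk with hA
  set D : ℝ := (1/ak) * (sk/hj + pj) with hD
  have hD0 : 0 < D := by
    have : 0 < sk/hj + pj := by positivity
    positivity
  have hsjhk : 0 < sj/hk := by positivity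
  have hdsmem : dstar ∈ Set.Icc 0 pk := by
    constructor
    · exact le_min hpk (by positivity)
    · exact min_le_left _ _
  obtain ⟨hds0, hdspk⟩ := hdsmem
  refine ⟨⟨hds0, hdspk⟩, ?_⟩
  intro d hd
  obtain ⟨hd0, hdpk⟩ := hd
  have hds : dstar = min pk (1/2 * max 0 (A - D)) := rfl
  clear_value A D
  have key : (A - d) * (D + d) ≤ (A - dstar) * (D + dstar) := by
    rcases le_total (A - D) 0 with h | h
    · have hz : dstar = 0 := by
        rw [hds, max_eq_left h]
        simp [min_eq_right hpk]
      rw [hz]; nlinarith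
    · have hm : max 0 (A - D) = A - D := max_eq_right h
      rcases le_total pk (1/2 * (A - D)) with h2 | h2
      · have hz : dstar = pk := by rw [hds, hm]; exact min_eq_left h2
        rw [hz]
        nlinarith [mul_nonneg (sub_nonneg.2 hdpk) (show (0:ℝ) ≤ A - D - pk - d by linarith)]
      · have hz : dstar = 1/2 * (A - D) := by rw [hds, hm]; exact min_eq_right h2
        rw [hz]; nlinarith [sq_nonneg (1/2 * (A - D) - d)]
  have fact1 : ∀ x : ℝ, 1 + hk * (pk - x) / sj = hk/sj * (A - x) := by
    intro x; rw [hA]; field_simp; ring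
  have fact2 : ∀ x : ℝ, 1 + hj * (pj + ak * x) / sk = hj*ak/sk * (D + x) := by
    intro x; rw [hD]; field_simp; ring
  have pA : ∀ x : ℝ, x ≤ pk → 0 < A - x := by
    intro x hx; rw [hA]; linarith
  have hAd : 0 < A - d := pA d hdpk
  have hAds : 0 < A - dstar := pA dstar hdspk
  have hDd : 0 < D + d := by linarith
  have hDds : 0 < D + dstar := by linarith
  have hc1 : 0 < hk/sj := by positivity
  have hc2 : 0 < hj*ak/sk := by positivity
  rw [fact1 d, fact1 dstar, fact2 d, fact2 dstar,
      Real.log_mul (ne_of_gt hc1) (ne_of_gt hAd),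
      Real.log_mul (ne_of_gt hc1) (ne_of_gt hAds),
      Real.log_mul (ne_of_gt hc2) (ne_of_gt hDd),
      Real.log_mul (ne_of_gt hc2) (ne_of_gt hDds)]
  have hlog : Real.log (A - d) + Real.log (D + d)
      ≤ Real.log (A - dstar) + Real.log (D + dstar) := by
    rw [← Real.log_mul (ne_of_gt hAd) (ne_of_gt hDd),
        ← Real.log_mul (ne_of_gt hAds) (ne_of_gt hDds)]
    exact Real.log_le_log (by positivity) key
  linarith
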